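/- Every d-manifold of Euler characteristic 1 + (−1)^d is Dehn–Sommerville: if G is a d-manifold with χ(G) = 1 + (−1)^d, then f_G(−1−t) = (−1)^{d+1} f_G(t). -/
import Mathlib


open Finset Polynomial

namespace SphereFormula

variable {V : Type} [DecidableEq V]

/-- A finite abstract simplicial complex: a finite collection of nonempty finite sets
that is closed under taking nonempty subsets. -/
def IsComplex (G : Finset (Finset V)) : Prop :=
  ∀ x ∈ G, x.Nonempty ∧ ∀ y, y ⊆ x → y.Nonempty → y ∈ G

/-- `w x = (-1)^(dim x)` where `dim x = |x| - 1`. -/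
def w (x : Finset V) : ℤ := (-1) ^ (x.card - 1)

/-- Euler characteristic of a finite set of simplices: `χ(A) = Σ_{x ∈ A} w x`. -/
def chi (A : Finset (Finset V)) : ℤ := ∑ x ∈ A, w x

/-- The star `U(x) = {y ∈ G : x ⊆ y}`. -/
def star (G : Finset (Finset V)) (x : Finset V) : Finset (Finset V) :=
  G.filter fun y => x ⊆ y

/-- The unit ball `B(x) = {z ∈ G : z ⊆ y for some y ∈ U(x)}` (closure of the star). -/
def ball (G : Finset (Finset V)) (x : Finset V) : Finset (Finset V) :=
  G.filter fun z => ∃ y ∈ G, x ⊆ y ∧ z ⊆ y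

/-- The unit sphere `S(x) = B(x) \ U(x)`. -/
def sphere (G : Finset (Finset V)) (x : Finset V) : Finset (Finset V) :=
  ball G x \ star G x

/-- The vertex set of `G`: those `v` with `{v} ∈ G`. -/
def verts (G : Finset (Finset V)) : Finset V :=
  (G.biUnion id).filter fun v => {v} ∈ G

/-- Contractibility, defined inductively: a single vertex complex is contractible, and `G`
is contractible if there is `x ∈ G` with both `S(x)` and `G \ U(x)` contractible. -/
inductive Contractible : Finset (Finset V) → Prop where
  | point (v : V) : Contractible ({({v} : Finset V)} : Finset (Finset V))
  | step (G : Finset (Finset V)) (x : Finset V) (hx : x ∈ G)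
      (hS : Contractible (sphere G x)) (hG : Contractible (G \ star G x)) :
      Contractible G

mutual
  /-- `G` is a `d`-manifold (`d ≥ 0`): every unit sphere `S(x)` is a `(d-1)`-sphere. -/
  inductive IsManifold : ℤ → Finset (Finset V) → Prop where
    | mk (d : ℤ) (G : Finset (Finset V)) (hd : 0 ≤ d)
        (h : ∀ x ∈ G, IsSphere (d - 1) (sphere G x)) : IsManifold d G

  /-- `d`-spheres: the empty complex is the `(-1)`-sphere, and a `d`-sphere is a
  `d`-manifold `G` such that `G \ U(x)` is contractible for some `x ∈ G`. -/
  inductive IsSphere : ℤ → Finset (Finset V) → Prop where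
    | empty : IsSphere (-1) (∅ : Finset (Finset V))
    | mk (d : ℤ) (G : Finset (Finset V)) (hm : IsManifold d G)
        (h : ∃ x ∈ G, Contractible (G \ star G x)) : IsSphere d G
end

/-- The f-function `f_G(t) = 1 + Σ_{k ≥ 0} f_k(G) t^(k+1) = 1 + Σ_{x ∈ G} t^|x|`. -/
noncomputable def fPoly (G : Finset (Finset V)) : Polynomial ℚ :=
  1 + ∑ x ∈ G, Polynomial.X ^ x.card

/-- `F_H(t) = ∫_0^t f_H(s) ds = t + Σ_{k ≥ 0} f_k(H) t^(k+2)/(k+2)`. -/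
noncomputable def FPoly (H : Finset (Finset V)) : Polynomial ℚ :=
  Polynomial.X +
    ∑ x ∈ H, Polynomial.C (((x.card : ℚ) + 1)⁻¹) * Polynomial.X ^ (x.card + 1)

/-- The join `G + H = G ∪ H ∪ {x ∪ y : x ∈ G, y ∈ H}`. -/
def joinC (G H : Finset (Finset V)) : Finset (Finset V) :=
  G ∪ H ∪ (G ×ˢ H).image fun p => p.1 ∪ p.2

/-- The barycentric refinement: simplices are the nonempty chains in `(G, ⊆)`. -/
def bary (G : Finset (Finset V)) : Finset (Finset (Finset V)) :=
  G.powerset.filter fun c => c.Nonempty ∧ ∀ x ∈ c, ∀ y ∈ c, x ⊆ y ∨ y ⊆ x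

/-- `f` is locally injective: distinct vertices of a common simplex have distinct values. -/
def LocallyInjective (G : Finset (Finset V)) (f : V → ℤ) : Prop :=
  ∀ x ∈ G, ∀ v ∈ x, ∀ u ∈ x, v ≠ u → f v ≠ f u

-- ============ auxiliary lemmas ============

lemma star_subset (G : Finset (Finset V)) (x : Finset V) : star G x ⊆ G :=
  filter_subset _ _

lemma star_subset_ball (G : Finset (Finset V)) (x : Finset V) :
    star G x ⊆ ball G x := by
  intro y hy
  simp only [star, ball, mem_filter] at *
  exact ⟨hy.1, y, hy.1, hy.2, subset_rfl⟩

lemma chi_sdiff {A B : Finset (Finset V)} (h : B ⊆ A) :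
    chi A = chi (A \ B) + chi B := by
  unfold chi; rw [Finset.sum_sdiff h]

lemma isComplex_sphere {G : Finset (Finset V)} (hG : IsComplex G) (x : Finset V) :
    IsComplex (sphere G x) := by
  intro z hz
  simp only [sphere, ball, star, mem_sdiff, mem_filter] at hz
  obtain ⟨⟨hzG, y, hyG, hxy, hzy⟩, hns⟩ := hz
  refine ⟨(hG z hzG).1, fun u hu hune => ?_⟩
  simp only [sphere, ball, star, mem_sdiff, mem_filter]
  have huG : u ∈ G := (hG z hzG).2 u hu hune
  refine ⟨⟨huG, y, hyG, hxy, hu.trans hzy⟩, fun hc => hns ⟨hzG, (hc.2).trans hu⟩⟩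

lemma isComplex_sdiff_star {G : Finset (Finset V)} (hG : IsComplex G) (x : Finset V) :
    IsComplex (G \ star G x) := by
  intro z hz
  simp only [star, mem_sdiff, mem_filter] at hz
  obtain ⟨hzG, hns⟩ := hz
  refine ⟨(hG z hzG).1, fun u hu hune => ?_⟩
  have huG : u ∈ G := (hG z hzG).2 u hu hune
  simp only [star, mem_sdiff, mem_filter]
  exact ⟨huG, fun hc => hns ⟨hzG, hc.2.trans hu⟩⟩

lemma chi_ball {G : Finset (Finset V)} (hG : IsComplex G) {x : Finset V} (hx : x ∈ G) :
    chi (ball G x) = 1 := by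
  obtain ⟨v, hv⟩ := (hG x hx).1
  have hvx : ({v} : Finset V) ∈ ball G x := by
    simp only [ball, mem_filter]
    exact ⟨(hG x hx).2 {v} (singleton_subset_iff.2 hv) (singleton_nonempty v),
      x, hx, subset_rfl, singleton_subset_iff.2 hv⟩
  -- split by membership of v
  have hsplit : chi (ball G x) =
      ∑ z ∈ (ball G x).filter (fun z => v ∈ z), w z +
      ∑ z ∈ (ball G x).filter (fun z => v ∉ z), w z := by
    unfold chi; rw [← Finset.sum_filter_add_sum_filter_not (ball G x) (fun z => v ∈ z)]
  have hvmem : ({v} : Finset V) ∈ (ball G x).filter (fun z => v ∈ z) := by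
    simp [hvx]
  have h1 : ∑ z ∈ (ball G x).filter (fun z => v ∈ z), w z =
      w {v} + ∑ z ∈ ((ball G x).filter (fun z => v ∈ z)).erase {v}, w z := by
    rw [Finset.add_sum_erase _ _ hvmem]
  have hbij : ∑ z ∈ ((ball G x).filter (fun z => v ∈ z)).erase {v}, w z =
      ∑ z ∈ (ball G x).filter (fun z => v ∉ z), - w z := by
    refine Finset.sum_nbij' (fun z => z.erase v) (fun z => insert v z) ?_ ?_ ?_ ?_ ?_
    · intro a ha
      simp only [mem_erase, mem_filter, ball] at ha ⊢
      obtain ⟨hne, ⟨haG, y, hyG, hxy, hay⟩, hva⟩ := ha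
      have hnonempty : (a.erase v).Nonempty := by
        obtain ⟨u, hu, hune⟩ : ∃ u ∈ a, u ≠ v := by
          by_contra hc
          push_neg at hc
          exact hne (Finset.eq_singleton_iff_unique_mem.2 ⟨hva, hc⟩)
        exact ⟨u, Finset.mem_erase.2 ⟨hune, hu⟩⟩
      refine ⟨⟨(hG a haG).2 _ (erase_subset _ _) hnonempty, y, hyG, hxy,
        (erase_subset _ _).trans hay⟩, by simp⟩
    · intro b hb
      simp only [mem_erase, mem_filter, ball] at hb ⊢
      obtain ⟨⟨hbG, y, hyG, hxy, hby⟩, hvb⟩ := hb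
      have hiy : insert v b ⊆ y := insert_subset (hxy hv) hby
      have hiG : insert v b ∈ G := (hG y hyG).2 _ hiy (insert_nonempty _ _)
      refine ⟨?_, ⟨hiG, y, hyG, hxy, hiy⟩, mem_insert_self _ _⟩
      intro hc
      obtain ⟨u, hu⟩ := (hG b hbG).1
      have : u = v := by
        have := hc ▸ (mem_insert_of_mem hu : u ∈ insert v b)
        simpa using this
      exact hvb (this ▸ hu)
    · intro a ha
      simp only [mem_erase, mem_filter] at ha
      exact insert_erase ha.2.2
    · intro b hb
      simp only [mem_filter] at hb
      exact erase_insert hb.2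
    · intro a ha
      simp only [mem_erase, mem_filter] at ha
      have hcard : (a.erase v).card = a.card - 1 := card_erase_of_mem ha.2.2
      have hpos : 1 ≤ a.card := card_pos.2 ⟨v, ha.2.2⟩
      unfold w
      rw [hcard]
      have h2 : 2 ≤ a.card := by
        by_contra hcon
        push_neg at hcon
        have h1' : a.card = 1 := by omega
        obtain ⟨u, hu⟩ := Finset.card_eq_one.1 h1'
        have : u = v := by
          have := ha.2.2
          rw [hu] at this; exact (Finset.mem_singleton.1 this).symm
        exact ha.1 (by rw [hu, this])
      have : a.card - 1 - 1 + 1 = a.card - 1 := by omega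
      calc ((-1 : ℤ)) ^ (a.card - 1) = (-1) ^ (a.card - 1 - 1 + 1) := by rw [this]
        _ = -(-1) ^ (a.card - 1 - 1) := by ring
  rw [hsplit, h1, hbij]
  simp [w]

lemma chi_star {G : Finset (Finset V)} (hG : IsComplex G) {x : Finset V} (hx : x ∈ G) :
    chi (star G x) = 1 - chi (sphere G x) := by
  have h := chi_sdiff (star_subset_ball G x)
  rw [chi_ball hG hx] at h
  unfold sphere
  omega

lemma chi_contractible {G : Finset (Finset V)} (h : Contractible G) (hG : IsComplex G) :
    chi G = 1 := by
  induction h with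
  | point v => simp [chi, w]
  | step G x hx hS hGc ihS ihG =>
    have h1 := ihS (isComplex_sphere hG x)
    have h2 := ihG (isComplex_sdiff_star hG x)
    have h3 := chi_sdiff (star_subset G x)
    rw [h2, chi_star hG hx, h1] at h3
    omega



lemma isSphere_elim {d : ℤ} {H : Finset (Finset V)} (h : IsSphere d H) :
    (d = -1 ∧ H = ∅) ∨
    (IsManifold d H ∧ ∃ x ∈ H, Contractible (H \ star H x)) := by
  cases h with
  | empty => exact Or.inl ⟨rfl, rfl⟩
  | mk d H hm hc => exact Or.inr ⟨hm, hc⟩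

lemma isManifold_elim {d : ℤ} {H : Finset (Finset V)} (h : IsManifold d H) :
    0 ≤ d ∧ ∀ x ∈ H, IsSphere (d - 1) (sphere H x) := by
  cases h with
  | mk d H hd hs => exact ⟨hd, hs⟩

lemma chi_isSphere (n : ℕ) : ∀ H : Finset (Finset V),
    IsSphere ((n : ℤ) - 1) H → IsComplex H → chi H = 1 - (-1) ^ n := by
  induction n with
  | zero =>
    intro H h hH
    rcases isSphere_elim h with ⟨_, rfl⟩ | ⟨hm, _⟩
    · simp [chi]
    · have := (isManifold_elim hm).1; omega
  | succ m ih =>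
    intro H h hH
    rcases isSphere_elim h with ⟨hd, _⟩ | ⟨hm, x, hx, hcon⟩
    · omega
    · obtain ⟨hd, hsp⟩ := isManifold_elim hm
      have hS : IsSphere ((m : ℤ) - 1) (sphere H x) := by
        have := hsp x hx
        convert this using 2
        push_cast; ring
      have h1 : chi (sphere H x) = 1 - (-1) ^ m := ih _ hS (isComplex_sphere hH x)
      have h2 : chi (H \ star H x) = 1 := chi_contractible hcon (isComplex_sdiff_star hH x)
      have h3 := chi_sdiff (star_subset H x)
      rw [h2, chi_star hH hx, h1] at h3
      rw [h3]
      push_cast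
      ring

lemma singleton_mem_of_mem_verts {G : Finset (Finset V)} {v : V} (hv : v ∈ verts G) :
    ({v} : Finset V) ∈ G := by
  simp only [verts, mem_filter] at hv
  exact hv.2

lemma sum_filter_eq_fPoly_sphere {G : Finset (Finset V)} (hG : IsComplex G) {v : V}
    (hv : ({v} : Finset V) ∈ G) :
    ∑ x ∈ G.filter (fun x => v ∈ x), (X : ℚ[X]) ^ (x.card - 1) = fPoly (sphere G {v}) := by
  have hmem : ({v} : Finset V) ∈ G.filter (fun x => v ∈ x) := by simp [hv]
  rw [← Finset.add_sum_erase _ _ hmem]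
  have h0 : (X : ℚ[X]) ^ (({v} : Finset V).card - 1) = 1 := by simp
  rw [h0]
  unfold fPoly
  congr 1
  refine Finset.sum_nbij' (fun z => z.erase v) (fun z => insert v z) ?_ ?_ ?_ ?_ ?_
  · intro a ha
    simp only [mem_erase, mem_filter] at ha
    obtain ⟨hne, haG, hva⟩ := ha
    have hnonempty : (a.erase v).Nonempty := by
      by_contra hc
      rw [Finset.not_nonempty_iff_eq_empty] at hc
      apply hne
      ext u
      simp only [Finset.mem_singleton]
      constructor
      · intro hu
        by_contra huv
        exact absurd (hc ▸ Finset.mem_erase.2 ⟨huv, hu⟩) (Finset.notMem_empty u)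
      · rintro rfl; exact hva
    simp only [sphere, ball, star, mem_sdiff, mem_filter]
    refine ⟨⟨(hG a haG).2 _ (erase_subset _ _) hnonempty, a, haG,
      singleton_subset_iff.2 hva, erase_subset _ _⟩, ?_⟩
    intro hc
    exact absurd (singleton_subset_iff.1 hc.2) (notMem_erase _ _)
  · intro b hb
    simp only [sphere, ball, star, mem_sdiff, mem_filter] at hb
    obtain ⟨⟨hbG, y, hyG, hvy, hby⟩, hns⟩ := hb
    have hvb : v ∉ b := fun hc => hns ⟨hbG, singleton_subset_iff.2 hc⟩
    have hiy : insert v b ⊆ y := insert_subset (singleton_subset_iff.1 hvy) hby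
    have hiG : insert v b ∈ G := (hG y hyG).2 _ hiy (insert_nonempty _ _)
    simp only [mem_erase, mem_filter]
    refine ⟨?_, hiG, mem_insert_self _ _⟩
    intro hc
    obtain ⟨u, hu⟩ := (hG b hbG).1
    have : u ∈ ({v} : Finset V) := hc ▸ mem_insert_of_mem hu
    rw [Finset.mem_singleton] at this
    exact hvb (this ▸ hu)
  · intro a ha
    simp only [mem_erase, mem_filter] at ha
    exact insert_erase ha.2.2
  · intro b hb
    simp only [sphere, ball, star, mem_sdiff, mem_filter] at hb
    obtain ⟨⟨hbG, _⟩, hns⟩ := hb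
    exact erase_insert fun hc => hns ⟨hbG, singleton_subset_iff.2 hc⟩
  · intro a ha
    simp only [mem_erase, mem_filter] at ha
    rw [card_erase_of_mem ha.2.2]

lemma derivative_fPoly {G : Finset (Finset V)} (hG : IsComplex G) :
    derivative (fPoly G) = ∑ v ∈ verts G, fPoly (sphere G {v}) := by
  unfold fPoly
  rw [derivative_add, derivative_one, zero_add, map_sum]
  have h1 : ∀ x ∈ G, derivative ((X : ℚ[X]) ^ x.card) = ∑ v ∈ x, (X : ℚ[X]) ^ (x.card - 1) := by
    intro x hx
    rw [derivative_X_pow, Finset.sum_const, nsmul_eq_mul]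
    congr 1
  rw [Finset.sum_congr rfl h1]
  have h2 : ∀ (x : Finset V) (v : V), x ∈ G ∧ v ∈ x ↔
      x ∈ G.filter (fun y => v ∈ y) ∧ v ∈ verts G := by
    intro x u
    simp only [mem_filter, verts, mem_biUnion, id]
    constructor
    · rintro ⟨hxG, hux⟩
      exact ⟨⟨hxG, hux⟩, ⟨x, hxG, hux⟩,
        (hG x hxG).2 {u} (singleton_subset_iff.2 hux) (singleton_nonempty u)⟩
    · rintro ⟨⟨hxG, hux⟩, _⟩
      exact ⟨hxG, hux⟩
  rw [Finset.sum_comm' h2]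
  exact Finset.sum_congr rfl fun v hv =>
    sum_filter_eq_fPoly_sphere hG (singleton_mem_of_mem_verts hv)

lemma fPoly_eval_zero {G : Finset (Finset V)} (hG : IsComplex G) :
    (fPoly G).eval 0 = 1 := by
  unfold fPoly
  rw [eval_add, eval_one, eval_finset_sum]
  rw [Finset.sum_eq_zero, add_zero]
  intro x hx
  rw [eval_pow, eval_X]
  exact zero_pow (Finset.card_pos.2 (hG x hx).1).ne'

lemma fPoly_eval_neg_one {G : Finset (Finset V)} (hG : IsComplex G) :
    (fPoly G).eval (-1) = 1 - (chi G : ℚ) := by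
  unfold fPoly chi
  rw [eval_add, eval_one, eval_finset_sum]
  have key : ∀ x ∈ G, eval (-1 : ℚ) ((X : ℚ[X]) ^ x.card) = -((w x : ℚ)) := by
    intro x hx
    rw [eval_pow, eval_X]
    have h1 : 1 ≤ x.card := Finset.card_pos.2 (hG x hx).1
    unfold w
    push_cast
    conv_lhs => rw [show x.card = (x.card - 1) + 1 from by omega]
    rw [pow_succ]
    ring
  rw [Finset.sum_congr rfl key, Finset.sum_neg_distrib]
  push_cast
  ring

lemma DS_of_spheres (d : ℕ) (G : Finset (Finset V)) (hG : IsComplex G)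
    (hchi : chi G = 1 + (-1) ^ d)
    (hsph : ∀ v ∈ verts G, (fPoly (sphere G {v})).comp (-1 - Polynomial.X) =
      (-1) ^ d * fPoly (sphere G {v})) :
    (fPoly G).comp (-1 - Polynomial.X) = (-1) ^ (d + 1) * fPoly G := by
  set g : ℚ[X] := (fPoly G).comp (-1 - Polynomial.X) - (-1) ^ (d + 1) * fPoly G with hg
  have hder : derivative g = 0 := by
    rw [hg, derivative_sub, derivative_comp, derivative_fPoly hG]
    have hq : derivative (-1 - Polynomial.X : ℚ[X]) = -1 := by
      rw [derivative_sub, derivative_X]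
      simp
    rw [hq, Polynomial.sum_comp, Finset.sum_congr rfl hsph]
    have hc : derivative ((-1 : ℚ[X]) ^ (d + 1)) = 0 := by
      have : ((-1 : ℚ[X]) ^ (d + 1)) = C ((-1 : ℚ) ^ (d + 1)) := by
        simp
      rw [this, derivative_C]
    rw [derivative_mul, hc, zero_mul, zero_add, derivative_fPoly hG, ← Finset.mul_sum]
    ring
  have hC : g = C (g.coeff 0) := eq_C_of_derivative_eq_zero hder
  have h0 : g.eval 0 = 0 := by
    rw [hg]
    rw [eval_sub, eval_comp, eval_mul]
    have h1 : (-1 - Polynomial.X : ℚ[X]).eval 0 = -1 := by simp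
    rw [h1, fPoly_eval_neg_one hG, eval_pow]
    rw [fPoly_eval_zero hG]
    have h2 : (chi G : ℚ) = 1 + (-1) ^ d := by
      rw [hchi]; push_cast; ring
    rw [h2]
    simp
    ring
  have : g = 0 := by
    rw [hC, Polynomial.coeff_zero_eq_eval_zero, h0, map_zero]
  rw [hg] at this
  exact sub_eq_zero.1 this
  

/-- every `d`-manifold with `χ(G) = 1 + (-1)^d` is Dehn–Sommerville:
`f_G(-1-t) = (-1)^{d+1} f_G(t)`. -/
theorem manifold_dehn_sommerville {V : Type} [DecidableEq V] (d : ℕ)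
    (G : Finset (Finset V)) (hG : IsComplex G) (hm : IsManifold (d : ℤ) G)
    (hchi : chi G = 1 + (-1) ^ d) :
    (fPoly G).comp (-1 - Polynomial.X) = (-1) ^ (d + 1) * fPoly G := by
  induction d generalizing G with
  | zero =>
    refine DS_of_spheres 0 G hG hchi ?_
    intro v hv
    have hs := (isManifold_elim hm).2 {v} (singleton_mem_of_mem_verts hv)
    rcases isSphere_elim hs with ⟨_, he⟩ | ⟨hm2, _⟩
    · rw [he]
      simp [fPoly]
    · have := (isManifold_elim hm2).1
      omega
  | succ m ih =>
    refine DS_of_spheres (m + 1) G hG hchi ?_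
    intro v hv
    have hs := (isManifold_elim hm).2 {v} (singleton_mem_of_mem_verts hv)
    have hidx : ((m + 1 : ℕ) : ℤ) - 1 = (m : ℤ) := by push_cast; ring
    have hchiS : chi (sphere G {v}) = 1 + (-1) ^ m := by
      have h := chi_isSphere (m + 1) (sphere G {v}) hs (isComplex_sphere hG _)
      have hpow : (-1 : ℤ) ^ (m + 1) = -(-1) ^ m := by ring
      omega
    rw [hidx] at hs
    have hman : IsManifold (m : ℤ) (sphere G {v}) := by
      rcases isSphere_elim hs with ⟨hd, _⟩ | ⟨hm2, _⟩
      · omega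
      · exact hm2
    exact ih (sphere G {v}) (isComplex_sphere hG _) hman hchiS


end SphereFormula
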